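/- arXiv:1311.0954 — 3 statements merged into one kernel-verified Lean document; each statement's English description precedes it below -/
import Mathlib

section
/- For every natural number a ≥ 1, the trace map T_a(x,y,z) = (x·U_a(y) − z·U_{a-1}(y), x·U_{a-1}(y) − z·U_{a-2}(y), y) preserves the Fricke–Vogt invariant: I(T_a(x,y,z)) = I(x,y,z) for all real (x,y,z). -/
/-- The Fricke–Vogt invariant. -/
def frickeVogt (x y z : ℝ) : ℝ := x ^ 2 + y ^ 2 + z ^ 2 - 2 * x * y * z - 1

/-- Evaluation of the Chebyshev polynomial of the second kind. -/
noncomputable def chebU (n : ℤ) (x : ℝ) : ℝ := (Polynomial.Chebyshev.U ℝ n).eval x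

lemma chebU_eq (n : ℤ) (x : ℝ) : chebU n x = 2 * x * chebU (n - 1) x - chebU (n - 2) x := by
  have := congrArg (Polynomial.eval x) (Polynomial.Chebyshev.U_eq ℝ n)
  simpa [chebU] using this

lemma chebU_cassini (n : ℤ) (x : ℝ) :
    chebU n x * chebU (n - 2) x = chebU (n - 1) x ^ 2 - 1 := by
  induction n using Polynomial.Chebyshev.induct with
  | zero => simp [chebU, Polynomial.Chebyshev.U_neg_two, Polynomial.Chebyshev.U_neg_one]
  | one =>
    norm_num [chebU, Polynomial.Chebyshev.U_one, Polynomial.Chebyshev.U_neg_one,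
      Polynomial.Chebyshev.U_zero]
  | add_two n h1 h2 =>
    have e := chebU_eq ((n : ℤ) + 2) x
    have e1 := chebU_eq ((n : ℤ) + 1) x
    rw [show ((n : ℤ) + 2 - 1) = (n : ℤ) + 1 by ring,
      show ((n : ℤ) + 2 - 2) = (n : ℤ) by ring] at e ⊢
    rw [show ((n : ℤ) + 1 - 2) = (n : ℤ) - 1 by ring,
      show ((n : ℤ) + 1 - 1) = (n : ℤ) by ring] at e1 h1
    linear_combination (chebU (n : ℤ) x) * e + h1 - (chebU ((n : ℤ) + 1) x) * e1
  | neg_add_one n h1 h2 =>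
    have e2 := chebU_eq (-(n : ℤ) - 1) x
    have e0 := chebU_eq (-(n : ℤ)) x
    rw [show (-(n : ℤ) - 1 - 1) = -(n : ℤ) - 2 by ring,
      show (-(n : ℤ) - 1 - 2) = -(n : ℤ) - 3 by ring] at e2 ⊢
    rw [show (-(n : ℤ) - 1) = -(n : ℤ) - 1 by ring] at e0
    rw [show (-(n : ℤ) - 2) = -(n : ℤ) - 2 by ring] at h1
    linear_combination (chebU (-(n : ℤ) - 1) x) * e2 + h1 - (chebU (-(n : ℤ) - 2) x) * e0

/-- The trace map `T_a`. -/
noncomputable def traceMap (a : ℕ) (v : ℝ × ℝ × ℝ) : ℝ × ℝ × ℝ :=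
  (v.1 * chebU a v.2.1 - v.2.2 * chebU ((a : ℤ) - 1) v.2.1,
   v.1 * chebU ((a : ℤ) - 1) v.2.1 - v.2.2 * chebU ((a : ℤ) - 2) v.2.1,
   v.2.1)

theorem frickeVogt_invariant_traceMap (a : ℕ) (ha : 1 ≤ a) (x y z : ℝ) :
    frickeVogt (traceMap a (x, y, z)).1 (traceMap a (x, y, z)).2.1 (traceMap a (x, y, z)).2.2
      = frickeVogt x y z := by
  simp only [traceMap, frickeVogt]
  have hrec := chebU_eq (a : ℤ) y
  have hcas := chebU_cassini (a : ℤ) y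
  set A := chebU (a : ℤ) y
  set B := chebU ((a : ℤ) - 1) y
  set C := chebU ((a : ℤ) - 2) y
  rw [hrec] at hcas ⊢
  linear_combination (-(x ^ 2 + z ^ 2 - 2 * x * y * z)) * hcas
end

section
/- For every natural number a ≥ 1, the matrix DT_a(1,1,1) = [[a+1, a²+a, −a],[a, a²−a, −a+1],[0,1,0]] has eigenvalues a²/2 − a√(a²+4)/2 + 1, a²/2 + a√(a²+4)/2 + 1, and −1. -/
/-- The differential of the trace map `T_a` at `P₁ = (1,1,1)`. -/
def DTa (a : ℕ) : Matrix (Fin 3) (Fin 3) ℝ :=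
  !![(a : ℝ) + 1, (a : ℝ) ^ 2 + a, -(a : ℝ);
     (a : ℝ), (a : ℝ) ^ 2 - a, -(a : ℝ) + 1;
     0, 1, 0]

lemma hasEigenvalue_of_mulVec (M : Matrix (Fin 3) (Fin 3) ℝ) (μ : ℝ) (v : Fin 3 → ℝ)
    (hv : v ≠ 0) (h : M.mulVec v = μ • v) :
    Module.End.HasEigenvalue (Matrix.toLin' M) μ :=
  Module.End.hasEigenvalue_of_hasEigenvector
    ⟨by rw [Module.End.mem_eigenspace_iff, Matrix.toLin'_apply, h], hv⟩

lemma eig_aux (a : ℕ) (ha : 1 ≤ a) (μ : ℝ) (hμ : μ ^ 2 = ((a : ℝ) ^ 2 + 2) * μ - 1) :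
    Module.End.HasEigenvalue (Matrix.toLin' (DTa a)) μ := by
  refine hasEigenvalue_of_mulVec _ μ ![((a : ℝ) + 2) * μ + a - 2, (a : ℝ) * μ, (a : ℝ)]
    (fun hc => ?_) ?_
  · have := congrFun hc 2
    simp at this
    omega
  · funext i
    fin_cases i <;>
      simp [DTa, Matrix.mulVec, dotProduct, Fin.sum_univ_three]
    · linear_combination (-(a : ℝ) - 2) * hμ
    · linear_combination (-(a : ℝ)) * hμ
    · ring

theorem DTa_eigenvalues (a : ℕ) (ha : 1 ≤ a) :
    Module.End.HasEigenvalue (Matrix.toLin' (DTa a))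
      ((a : ℝ) ^ 2 / 2 - (a : ℝ) * Real.sqrt ((a : ℝ) ^ 2 + 4) / 2 + 1) ∧
    Module.End.HasEigenvalue (Matrix.toLin' (DTa a))
      ((a : ℝ) ^ 2 / 2 + (a : ℝ) * Real.sqrt ((a : ℝ) ^ 2 + 4) / 2 + 1) ∧
    Module.End.HasEigenvalue (Matrix.toLin' (DTa a)) (-1 : ℝ) := by
  have hs : Real.sqrt ((a : ℝ) ^ 2 + 4) ^ 2 = (a : ℝ) ^ 2 + 4 :=
    Real.sq_sqrt (by positivity)
  refine ⟨eig_aux a ha _ (by linear_combination ((a : ℝ) ^ 2 / 4) * hs),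
    eig_aux a ha _ (by linear_combination ((a : ℝ) ^ 2 / 4) * hs), ?_⟩
  refine hasEigenvalue_of_mulVec _ (-1) ![(a : ℝ), -1, 1] (fun hc => ?_) ?_
  · have := congrFun hc 2
    simp at this
  · funext i
    fin_cases i <;>
      simp [DTa, Matrix.mulVec, dotProduct, Fin.sum_univ_three] <;> ring
end

section
/- The monoid ℳ of 2×2 matrices [[p,q],[r,s]] with nonnegative integer entries and determinant ps − qr = ±1 is generated (as a monoid) by h₁ = [[0,1],[1,0]] and h₂ = [[1,1],[1,0]]. -/
/-- `h₁ = [[0,1],[1,0]]`. -/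
def h1 : Matrix (Fin 2) (Fin 2) ℤ := !![0, 1; 1, 0]

/-- `h₂ = [[1,1],[1,0]]`. -/
def h2 : Matrix (Fin 2) (Fin 2) ℤ := !![1, 1; 1, 0]

lemma h1_mem : h1 ∈ Submonoid.closure {h1, h2} :=
  Submonoid.subset_closure (by simp)

lemma h2_mem : h2 ∈ Submonoid.closure {h1, h2} :=
  Submonoid.subset_closure (by simp)

lemma key : ∀ n : ℕ, ∀ p q r s : ℤ, 0 ≤ p → 0 ≤ q → 0 ≤ r → 0 ≤ s →
    p + q + r + s ≤ n → (p * s - q * r = 1 ∨ p * s - q * r = -1) →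
    !![p, q; r, s] ∈ Submonoid.closure {h1, h2} := by
  intro n
  induction n with
  | zero =>
    intro p q r s hp hq hr hs hsum hdet
    exfalso
    have : p = 0 ∧ q = 0 ∧ r = 0 ∧ s = 0 := by omega
    obtain ⟨h1', h2', h3', h4'⟩ := this
    subst h1'; subst h2'; subst h3'; subst h4'
    simp at hdet
  | succ n ih =>
    intro p q r s hp hq hr hs hsum hdet
    by_cases hA : r ≤ p ∧ s ≤ q ∧ (1 ≤ r ∨ 1 ≤ s)
    · obtain ⟨hrp, hsq, hrs⟩ := hA
      have hM : !![p, q; r, s] = h2 * !![r, s; p - r, q - s] := by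
        ext i j
        fin_cases i <;> fin_cases j <;>
          simp [h2, Matrix.mul_apply, Fin.sum_univ_two]
      rw [hM]
      refine mul_mem h2_mem (ih r s (p - r) (q - s) hr hs (by omega) (by omega) (by omega) ?_)
      rcases hdet with h | h
      · right; linarith [h]
      · left; linarith [h]
    · by_cases hB : p ≤ r ∧ q ≤ s ∧ (1 ≤ p ∨ 1 ≤ q)
      · obtain ⟨hpr, hqs, hpq⟩ := hB
        have hM : !![p, q; r, s] = h1 * (h2 * !![p, q; r - p, s - q]) := by
          ext i j
          fin_cases i <;> fin_cases j <;>
            simp [h1, h2, Matrix.mul_apply, Fin.sum_univ_two]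
        rw [hM]
        refine mul_mem h1_mem (mul_mem h2_mem
          (ih p q (r - p) (s - q) hp hq (by omega) (by omega) (by omega) ?_))
        rcases hdet with h | h
        · left; linarith
        · right; linarith
      · -- remaining cases: M = 1 or M = h1
        -- Not (r ≤ p ∧ s ≤ q ∧ (r ≥ 1 ∨ s ≥ 1)), not (p ≤ r ∧ q ≤ s ∧ (p ≥ 1 ∨ q ≥ 1))
        by_cases hrs0 : r = 0 ∧ s = 0
        · exfalso
          obtain ⟨h3', h4'⟩ := hrs0; subst h3'; subst h4'
          simp at hdet
        · by_cases hpq0 : p = 0 ∧ q = 0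
          · exfalso
            obtain ⟨h3', h4'⟩ := hpq0; subst h3'; subst h4'
            simp at hdet
          · -- now neither row is zero, so hA, hB fail on the comparison part
            have hA' : ¬(r ≤ p ∧ s ≤ q) := fun h => hA ⟨h.1, h.2, by omega⟩
            have hB' : ¬(p ≤ r ∧ q ≤ s) := fun h => hB ⟨h.1, h.2, by omega⟩
            -- so (p < r ∨ q < s) ∧ (r < p ∨ s < q)
            rcases lt_or_ge p r with hpr | hpr
            · have hsq : s < q := by omega
              -- q*r ≥ (s+1)*(p+1), det must be -1, p = s = 0, q*r = 1
              have hd : p * s - q * r = -1 := by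
                rcases hdet with h | h
                · exfalso; nlinarith
                · exact h
              have hps : p = 0 ∧ s = 0 := by constructor <;> nlinarith
              obtain ⟨e1, e2⟩ := hps; subst e1; subst e2
              have hqr : q * r = 1 := by linarith
              have hq1 : q = 1 := by nlinarith
              have hr1 : r = 1 := by nlinarith
              subst hq1; subst hr1
              exact h1_mem
            · have hrp : r ≤ p := hpr
              have hqs : q < s := by omega
              have hpr' : r < p := by omega
              have hd : p * s - q * r = 1 := by
                rcases hdet with h | h
                · exact h
                · exfalso; nlinarith
              have hqr0 : q = 0 ∧ r = 0 := by constructor <;> nlinarith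
              obtain ⟨e1, e2⟩ := hqr0; subst e1; subst e2
              have hps : p * s = 1 := by linarith
              have hp1 : p = 1 := by nlinarith
              have hs1 : s = 1 := by nlinarith
              subst hp1; subst hs1
              have : !![(1:ℤ), 0; 0, 1] = (1 : Matrix (Fin 2) (Fin 2) ℤ) := by
                ext i j; fin_cases i <;> fin_cases j <;> simp
              rw [this]
              exact one_mem _

theorem monoid_generators_WenWen :
    {M : Matrix (Fin 2) (Fin 2) ℤ | (∀ i j, 0 ≤ M i j) ∧ (M.det = 1 ∨ M.det = -1)} =
      (Submonoid.closure {h1, h2} : Submonoid (Matrix (Fin 2) (Fin 2) ℤ)) := by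
  ext M
  simp only [Set.mem_setOf_eq, SetLike.mem_coe]
  constructor
  · rintro ⟨hpos, hdet⟩
    rw [Matrix.eta_fin_two M]
    rw [Matrix.det_fin_two] at hdet
    exact key (M 0 0 + M 0 1 + M 1 0 + M 1 1).toNat _ _ _ _
      (hpos 0 0) (hpos 0 1) (hpos 1 0) (hpos 1 1) (by omega) hdet
  · intro hM
    induction hM using Submonoid.closure_induction with
    | mem x hx =>
      rcases hx with h | h <;> subst h <;>
        refine ⟨?_, ?_⟩ <;>
          first
          | (intro i j; fin_cases i <;> fin_cases j <;> simp [h1, h2])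
          | (simp [h1, h2, Matrix.det_fin_two_of])
    | one =>
      refine ⟨fun i j => ?_, Or.inl (by simp)⟩
      fin_cases i <;> fin_cases j <;> simp
    | mul x y _ _ hx hy =>
      refine ⟨fun i j => ?_, ?_⟩
      · rw [Matrix.mul_apply]
        exact Finset.sum_nonneg fun k _ => mul_nonneg (hx.1 i k) (hy.1 k j)
      · rw [Matrix.det_mul]
        rcases hx.2 with h | h <;> rcases hy.2 with h' | h' <;> rw [h, h'] <;> simp
end
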